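/- Let g>0, θ∈ℝ, γ>1, k>0, ρ₀>0 be constants, S, Z : ℝ→ℝ C¹ functions, and I₁, I₂, h_w C¹ functions. Suppose M, D, A, Q : ℝ×ℝ→ℝ are C¹ with M>0, A>0, S−A>0 and solve the full two-layer system: ∂ₜM+∂ₓD=0; ∂ₜD+∂ₓ(D²/M + M c_a²/γ) = (M c_a²/(γ(S−A)))·∂ₓ(S−A); ∂ₜA+∂ₓQ=0; ∂ₜQ+∂ₓ( Q²/A + g I₁ cosθ + A·M c_a²/(γ(S−A)) ) = −gA∂ₓZ + g I₂ cosθ + (M c_a²/(γ(S−A)))·∂ₓA, where c_a² = kγ(ρ₀M/(S−A))^{γ−1}; assume the geometric identities ∂ₓ[I₁] = I₂ + A ∂ₓ[h_w] and ∂ₜ[A h_w − I₁] = h_w ∂ₜA. Define the total energy E = E_a + E_w with E_a = M v²/2 + c_a² M/(γ(γ−1)), E_w = A u²/2 + g(A h_w − I₁)cosθ + gAZ (v=D/M, u=Q/A), and the total entropy flux H = H_a + H_w with H_a = (E_a + c_a² M/γ)v and H_w = (E_w + g I₁ cosθ + A·M c_a²/(γ(S−A)))u. Then the entropy equality ∂ₜE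 + ∂ₓH = 0 holds. -/

import Mathlib

open Real MeasureTheory

noncomputable def pt (f : ℝ → ℝ → ℝ) (t x : ℝ) : ℝ := deriv (fun s => f s x) t

noncomputable def px (f : ℝ → ℝ → ℝ) (t x : ℝ) : ℝ := deriv (fun y => f t y) x

/-!
Each layer satisfies an energy balance whose only defect is the work of the interface pressure
`p = M c_a² / (γ (S - A))`: the air gains `p ∂ₜA` as its section `S - A` is compressed, the water
loses exactly `p ∂ₜA`. Each balance is the classical computation: `∂ₜE + ∂ₓH` minus the velocity
times the momentum equation and a multiple of the mass equation; for the air it only uses that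
`c_a²` has logarithmic derivative `γ - 1` times that of the density `ρ₀ M / (S - A)`.
-/

open Function

theorem DifferentiableAt.hasDerivAt_pt {f : ℝ → ℝ → ℝ} {t x : ℝ}
    (hf : DifferentiableAt ℝ (uncurry f) (t, x)) : HasDerivAt (fun s => f s x) (pt f t x) t :=
  (hf.comp (f := fun s : ℝ => (s, x)) t (by fun_prop)).hasDerivAt

theorem DifferentiableAt.hasDerivAt_px {f : ℝ → ℝ → ℝ} {t x : ℝ}
    (hf : DifferentiableAt ℝ (uncurry f) (t, x)) : HasDerivAt (fun y => f t y) (px f t x) x :=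
  (hf.comp (f := fun y : ℝ => (t, y)) x (by fun_prop)).hasDerivAt

theorem HasDerivAt.div_rpow_const {f g : ℝ → ℝ} {f' g' s : ℝ} (hf : HasDerivAt f f' s)
    (hg : HasDerivAt g g' s) (hf0 : f s ≠ 0) (hg0 : g s ≠ 0) (p : ℝ) :
    HasDerivAt (fun s => (f s / g s) ^ p) ((f s / g s) ^ p * p * (f' / f s - g' / g s)) s := by
  have hfg : f s / g s ≠ 0 := div_ne_zero hf0 hg0
  convert (hf.fun_div hg hg0).rpow_const (p := p) (Or.inl hfg) using 1
  rw [rpow_sub_one hfg]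
  field_simp

theorem hasDerivAt_soundSpeedSq (k γ : ℝ) {ρ₀ : ℝ} (hρ₀ : ρ₀ ≠ 0) {m σ : ℝ → ℝ} {m' σ' s : ℝ}
    (hm : HasDerivAt m m' s) (hσ : HasDerivAt σ σ' s) (hm0 : m s ≠ 0) (hσ0 : σ s ≠ 0) :
    HasDerivAt (fun s => k * γ * (ρ₀ * m s / σ s) ^ (γ - 1))
      (k * γ * (ρ₀ * m s / σ s) ^ (γ - 1) * (γ - 1) * (m' / m s - σ' / σ s)) s := by
  refine (((hm.const_mul ρ₀).div_rpow_const hσ (mul_ne_zero hρ₀ hm0) hσ0 (γ - 1)).const_mul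
    (k * γ)).congr_deriv ?_
  field_simp

theorem air_energy_balance {γ : ℝ} (hγ₀ : γ ≠ 0) (hγ₁ : γ ≠ 1)
    {M D σ c2 v Ea Ha : ℝ → ℝ → ℝ} {t x : ℝ}
    (hM : DifferentiableAt ℝ (uncurry M) (t, x)) (hD : DifferentiableAt ℝ (uncurry D) (t, x))
    (hM0 : M t x ≠ 0) (hσ0 : σ t x ≠ 0)
    (hc2t : HasDerivAt (fun s => c2 s x)
      (c2 t x * (γ - 1) * (pt M t x / M t x - pt σ t x / σ t x)) t)
    (hc2x : HasDerivAt (fun y => c2 t y)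
      (c2 t x * (γ - 1) * (px M t x / M t x - px σ t x / σ t x)) x)
    (hmass : pt M t x + px D t x = 0)
    (hmom : pt D t x + px (fun t x => D t x ^ 2 / M t x + M t x * c2 t x / γ) t x
        = M t x * c2 t x / (γ * σ t x) * px σ t x)
    (hv : ∀ t x, v t x = D t x / M t x)
    (hEa : ∀ t x, Ea t x = M t x * v t x ^ 2 / 2 + c2 t x * M t x / (γ * (γ - 1)))
    (hHa : ∀ t x, Ha t x = (Ea t x + c2 t x * M t x / γ) * v t x) :
    ∃ eₜ hₓ, HasDerivAt (fun s => Ea s x) eₜ t ∧ HasDerivAt (fun y => Ha t y) hₓ x ∧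
      eₜ + hₓ = -(M t x * c2 t x / (γ * σ t x) * pt σ t x) := by
  obtain rfl := funext₂ hv
  obtain rfl := funext₂ hEa
  obtain rfl := funext₂ hHa
  have hγ₁' : γ - 1 ≠ 0 := sub_ne_zero.mpr hγ₁
  have hMt := hM.hasDerivAt_pt
  have hMx := hM.hasDerivAt_px
  have hDt := hD.hasDerivAt_pt
  have hDx := hD.hasDerivAt_px
  have hflux : px (fun t x => D t x ^ 2 / M t x + M t x * c2 t x / γ) t x = _ :=
    (((hDx.pow 2).div hMx hM0).add ((hMx.mul hc2x).div_const γ)).deriv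
  have hEt := ((hMt.mul ((hDt.div hMt hM0).pow 2)).div_const 2).add
    ((hc2t.mul hMt).div_const (γ * (γ - 1)))
  have hEx := ((hMx.mul ((hDx.div hMx hM0).pow 2)).div_const 2).add
    ((hc2x.mul hMx).div_const (γ * (γ - 1)))
  refine ⟨_, _, hEt, (hEx.add ((hc2x.mul hMx).div_const γ)).mul (hDx.div hMx hM0), ?_⟩
  rw [hflux] at hmom
  simp only [Pi.div_apply, Pi.pow_apply, Pi.mul_apply, Pi.add_apply, Nat.reduceSub, pow_one]
    at hmom ⊢
  linear_combination (norm := skip)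
    (c2 t x / (γ - 1) - (D t x / M t x) ^ 2 / 2) * hmass + (D t x / M t x) * hmom
  field_simp
  ring

theorem water_energy_balance {g θ : ℝ} {A Q I₁ I₂ hw P u Ew Hw : ℝ → ℝ → ℝ} {Z : ℝ → ℝ}
    {t x : ℝ} (hA : DifferentiableAt ℝ (uncurry A) (t, x))
    (hQ : DifferentiableAt ℝ (uncurry Q) (t, x)) (hI₁ : DifferentiableAt ℝ (uncurry I₁) (t, x))
    (hhw : DifferentiableAt ℝ (uncurry hw) (t, x)) (hZ : DifferentiableAt ℝ Z x)
    (hP : DifferentiableAt ℝ (fun y => P t y) x) (hA0 : A t x ≠ 0)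
    (hmass : pt A t x + px Q t x = 0)
    (hmom : pt Q t x + px (fun t x => Q t x ^ 2 / A t x + g * I₁ t x * Real.cos θ
          + A t x * P t x) t x
        = -g * A t x * deriv Z x + g * I₂ t x * Real.cos θ + P t x * px A t x)
    (hLeibnizX : px I₁ t x = I₂ t x + A t x * px hw t x)
    (hLeibnizT : pt (fun t x => A t x * hw t x - I₁ t x) t x = hw t x * pt A t x)
    (hu : ∀ t x, u t x = Q t x / A t x)
    (hEw : ∀ t x, Ew t x = A t x * u t x ^ 2 / 2
        + g * (A t x * hw t x - I₁ t x) * Real.cos θ + g * A t x * Z x)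
    (hHw : ∀ t x, Hw t x = (Ew t x + g * I₁ t x * Real.cos θ + A t x * P t x) * u t x) :
    ∃ eₜ hₓ, HasDerivAt (fun s => Ew s x) eₜ t ∧ HasDerivAt (fun y => Hw t y) hₓ x ∧
      eₜ + hₓ = -(P t x * pt A t x) := by
  obtain rfl := funext₂ hu
  obtain rfl := funext₂ hEw
  obtain rfl := funext₂ hHw
  have hAt := hA.hasDerivAt_pt
  have hAx := hA.hasDerivAt_px
  have hQt := hQ.hasDerivAt_pt
  have hQx := hQ.hasDerivAt_px
  have hI₁x := hI₁.hasDerivAt_px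
  have hhwx := hhw.hasDerivAt_px
  have hPx := hP.hasDerivAt
  have hZx := hZ.hasDerivAt
  have hpotential : HasDerivAt (fun s => A s x * hw s x - I₁ s x) (hw t x * pt A t x) t := by
    rw [← hLeibnizT]
    exact ((hAt.mul hhw.hasDerivAt_pt).sub hI₁.hasDerivAt_pt).differentiableAt.hasDerivAt
  have hflux : px (fun t x => Q t x ^ 2 / A t x + g * I₁ t x * Real.cos θ
      + A t x * P t x) t x = _ :=
    ((((hQx.pow 2).div hAx hA0).add ((hI₁x.const_mul g).mul_const (Real.cos θ))).add
      (hAx.mul hPx)).deriv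
  have hEx := (((hAx.mul ((hQx.div hAx hA0).pow 2)).div_const 2).add
    ((((hAx.mul hhwx).sub hI₁x).const_mul g).mul_const (Real.cos θ))).add
    ((hAx.const_mul g).mul hZx)
  have hEt := (((hAt.mul ((hQt.div hAt hA0).pow 2)).div_const 2).add
    ((hpotential.const_mul g).mul_const (Real.cos θ))).add ((hAt.const_mul g).mul_const (Z x))
  refine ⟨_, _, hEt, ((hEx.add ((hI₁x.const_mul g).mul_const (Real.cos θ))).add
    (hAx.mul hPx)).mul (hQx.div hAx hA0), ?_⟩
  rw [hflux] at hmom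
  simp only [Pi.div_apply, Pi.pow_apply, Pi.mul_apply, Pi.add_apply, Pi.sub_apply,
    Nat.reduceSub, pow_one] at hmom ⊢
  linear_combination (norm := skip)
    (g * Real.cos θ * hw t x + g * Z x - (Q t x / A t x) ^ 2 / 2 + P t x) * hmass
      + (Q t x / A t x) * hmom - g * Real.cos θ * (Q t x / A t x) * hLeibnizX
  field_simp
  ring

theorem total_energy_equality_general
    (g θ γ k ρ₀ : ℝ) (hγ : 1 < γ) (hρ₀ : 0 < ρ₀)
    (S Z : ℝ → ℝ) (hSreg : ContDiff ℝ 1 S) (hZreg : ContDiff ℝ 1 Z)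
    (I₁ I₂ hw : ℝ → ℝ → ℝ)
    (hI₁reg : ContDiff ℝ 1 (Function.uncurry I₁))
    (hhwreg : ContDiff ℝ 1 (Function.uncurry hw))
    (M D A Q : ℝ → ℝ → ℝ)
    (hMreg : ContDiff ℝ 1 (Function.uncurry M))
    (hDreg : ContDiff ℝ 1 (Function.uncurry D))
    (hAreg : ContDiff ℝ 1 (Function.uncurry A))
    (hQreg : ContDiff ℝ 1 (Function.uncurry Q))
    (hMpos : ∀ t x, 0 < M t x) (hApos : ∀ t x, 0 < A t x)
    (hSA : ∀ t x, 0 < S x - A t x)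
    (ca2 : ℝ → ℝ → ℝ)
    (hca2 : ∀ t x, ca2 t x = k * γ * (ρ₀ * M t x / (S x - A t x)) ^ (γ - 1))
    (hmassAir : ∀ t x, pt M t x + px D t x = 0)
    (hmomAir : ∀ t x,
      pt D t x + px (fun t x => D t x ^ 2 / M t x + M t x * ca2 t x / γ) t x
        = M t x * ca2 t x / (γ * (S x - A t x)) * px (fun t x => S x - A t x) t x)
    (hmassWater : ∀ t x, pt A t x + px Q t x = 0)
    (hmomWater : ∀ t x,
      pt Q t x + px (fun t x => Q t x ^ 2 / A t x + g * I₁ t x * Real.cos θ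
          + A t x * (M t x * ca2 t x / (γ * (S x - A t x)))) t x
        = -g * A t x * deriv Z x + g * I₂ t x * Real.cos θ
          + M t x * ca2 t x / (γ * (S x - A t x)) * px A t x)
    (hLeibnizX : ∀ t x, px I₁ t x = I₂ t x + A t x * px hw t x)
    (hLeibnizT : ∀ t x,
      pt (fun t x => A t x * hw t x - I₁ t x) t x = hw t x * pt A t x)
    (v u : ℝ → ℝ → ℝ)
    (hv : ∀ t x, v t x = D t x / M t x)
    (hu : ∀ t x, u t x = Q t x / A t x)
    (Ea Ew E Ha Hw H : ℝ → ℝ → ℝ)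
    (hEa : ∀ t x, Ea t x = M t x * v t x ^ 2 / 2
        + ca2 t x * M t x / (γ * (γ - 1)))
    (hEw : ∀ t x, Ew t x = A t x * u t x ^ 2 / 2
        + g * (A t x * hw t x - I₁ t x) * Real.cos θ + g * A t x * Z x)
    (hE : ∀ t x, E t x = Ea t x + Ew t x)
    (hHa : ∀ t x, Ha t x = (Ea t x + ca2 t x * M t x / γ) * v t x)
    (hHw : ∀ t x, Hw t x = (Ew t x + g * I₁ t x * Real.cos θ
        + A t x * (M t x * ca2 t x / (γ * (S x - A t x)))) * u t x)
    (hH : ∀ t x, H t x = Ha t x + Hw t x) :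
    ∀ t x, pt E t x + px H t x = 0 := by
  intro t x
  have hγ₀ : γ ≠ 0 := (zero_lt_one.trans hγ).ne'
  have hdiff {f : ℝ → ℝ → ℝ} (hf : ContDiff ℝ 1 (uncurry f)) :
      DifferentiableAt ℝ (uncurry f) (t, x) :=
    hf.contDiffAt.differentiableAt one_ne_zero
  have hσ : DifferentiableAt ℝ (uncurry fun t x => S x - A t x) (t, x) :=
    ((hSreg.contDiffAt.differentiableAt one_ne_zero).comp _ differentiableAt_snd).sub
      (hdiff hAreg)
  obtain rfl := funext₂ hca2
  have hc2t := hasDerivAt_soundSpeedSq k γ hρ₀.ne' (hdiff hMreg).hasDerivAt_pt hσ.hasDerivAt_pt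
    (hMpos t x).ne' (hSA t x).ne'
  have hc2x := hasDerivAt_soundSpeedSq k γ hρ₀.ne' (hdiff hMreg).hasDerivAt_px hσ.hasDerivAt_px
    (hMpos t x).ne' (hSA t x).ne'
  obtain ⟨ea, fa, hEat, hHax, hair⟩ := air_energy_balance hγ₀ hγ.ne'
    (hdiff hMreg) (hdiff hDreg) (hMpos t x).ne' (hSA t x).ne' hc2t hc2x (hmassAir t x)
    (hmomAir t x) hv hEa hHa
  have hP := ((hdiff hMreg).hasDerivAt_px.mul hc2x).div (hσ.hasDerivAt_px.const_mul γ)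
    (mul_ne_zero hγ₀ (hSA t x).ne')
  obtain ⟨ew, fw, hEwt, hHwx, hwater⟩ := water_energy_balance (hdiff hAreg) (hdiff hQreg)
    (hdiff hI₁reg) (hdiff hhwreg) (hZreg.contDiffAt.differentiableAt one_ne_zero)
    hP.differentiableAt (hApos t x).ne' (hmassWater t x) (hmomWater t x) (hLeibnizX t x)
    (hLeibnizT t x) hu hEw hHw
  have hEt : HasDerivAt (fun s => E s x) (ea + ew) t :=
    (hEat.add hEwt).congr_of_eventuallyEq (.of_forall fun s => hE s x)
  have hHx : HasDerivAt (fun y => H t y) (fa + fw) x :=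
    (hHax.add hHwx).congr_of_eventuallyEq (.of_forall fun y => hH t y)
  have hσt : pt (fun t x => S x - A t x) t x = -pt A t x := deriv_const_sub _
  rw [pt, px, hEt.deriv, hHx.deriv]
  rw [hσt] at hair
  linear_combination hair + hwater

/-- for C¹ solutions of the full two-layer system (with the two
geometric identities), the total energy `E = E_a + E_w` and the total entropy
flux `H = H_a + H_w` satisfy the entropy equality `∂ₜ E + ∂ₓ H = 0`. -/
theorem total_energy_equality
    (g θ γ k ρ₀ : ℝ) (hg : 0 < g) (hγ : 1 < γ) (hk : 0 < k) (hρ₀ : 0 < ρ₀)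
    (S Z : ℝ → ℝ) (hSreg : ContDiff ℝ 1 S) (hZreg : ContDiff ℝ 1 Z)
    (I₁ I₂ hw : ℝ → ℝ → ℝ)
    (hI₁reg : ContDiff ℝ 1 (Function.uncurry I₁))
    (hI₂reg : ContDiff ℝ 1 (Function.uncurry I₂))
    (hhwreg : ContDiff ℝ 1 (Function.uncurry hw))
    (M D A Q : ℝ → ℝ → ℝ)
    (hMreg : ContDiff ℝ 1 (Function.uncurry M))
    (hDreg : ContDiff ℝ 1 (Function.uncurry D))
    (hAreg : ContDiff ℝ 1 (Function.uncurry A))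
    (hQreg : ContDiff ℝ 1 (Function.uncurry Q))
    (hMpos : ∀ t x, 0 < M t x) (hApos : ∀ t x, 0 < A t x)
    (hSA : ∀ t x, 0 < S x - A t x)
    (ca2 : ℝ → ℝ → ℝ)
    (hca2 : ∀ t x, ca2 t x = k * γ * (ρ₀ * M t x / (S x - A t x)) ^ (γ - 1))
    (hmassAir : ∀ t x, pt M t x + px D t x = 0)
    (hmomAir : ∀ t x,
      pt D t x + px (fun t x => D t x ^ 2 / M t x + M t x * ca2 t x / γ) t x
        = M t x * ca2 t x / (γ * (S x - A t x)) * px (fun t x => S x - A t x) t x)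
    (hmassWater : ∀ t x, pt A t x + px Q t x = 0)
    (hmomWater : ∀ t x,
      pt Q t x + px (fun t x => Q t x ^ 2 / A t x + g * I₁ t x * Real.cos θ
          + A t x * (M t x * ca2 t x / (γ * (S x - A t x)))) t x
        = -g * A t x * deriv Z x + g * I₂ t x * Real.cos θ
          + M t x * ca2 t x / (γ * (S x - A t x)) * px A t x)
    (hLeibnizX : ∀ t x, px I₁ t x = I₂ t x + A t x * px hw t x)
    (hLeibnizT : ∀ t x,
      pt (fun t x => A t x * hw t x - I₁ t x) t x = hw t x * pt A t x)
    (v u : ℝ → ℝ → ℝ)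
    (hv : ∀ t x, v t x = D t x / M t x)
    (hu : ∀ t x, u t x = Q t x / A t x)
    (Ea Ew E Ha Hw H : ℝ → ℝ → ℝ)
    (hEa : ∀ t x, Ea t x = M t x * v t x ^ 2 / 2
        + ca2 t x * M t x / (γ * (γ - 1)))
    (hEw : ∀ t x, Ew t x = A t x * u t x ^ 2 / 2
        + g * (A t x * hw t x - I₁ t x) * Real.cos θ + g * A t x * Z x)
    (hE : ∀ t x, E t x = Ea t x + Ew t x)
    (hHa : ∀ t x, Ha t x = (Ea t x + ca2 t x * M t x / γ) * v t x)
    (hHw : ∀ t x, Hw t x = (Ew t x + g * I₁ t x * Real.cos θ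
        + A t x * (M t x * ca2 t x / (γ * (S x - A t x)))) * u t x)
    (hH : ∀ t x, H t x = Ha t x + Hw t x) :
    ∀ t x, pt E t x + px H t x = 0 :=
  total_energy_equality_general g θ γ k ρ₀ hγ hρ₀ S Z hSreg hZreg I₁ I₂ hw hI₁reg hhwreg M D A Q
    hMreg hDreg hAreg hQreg hMpos hApos hSA ca2 hca2 hmassAir hmomAir hmassWater hmomWater hLeibnizX
    hLeibnizT v u hv hu Ea Ew E Ha Hw H hEa hEw hE hHa hHw hH
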